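/- For any k-bounded partition λ, the k-split polynomial expands unitriangularly in the homogeneous basis with integer coefficients and k-bounded indices: G_λ^{(k)} = h_λ + Σ_{μ > λ, μ_1 ≤ k} g_{λμ}^{(k)} h_μ, where the sum is over k-bounded partitions μ of |λ| with μ > λ in dominance order and each g_{λμ}^{(k)} is an integer. -/

import Mathlib

open scoped BigOperators Classical

noncomputable section

/-- Model of the ring of symmetric functions `Λ = ℚ[h₁,h₂,…]`: the polynomial
ring on the (algebraically independent) complete homogeneous generators. -/
abbrev SymFn : Type := MvPolynomial ℕ ℚ

/-- The complete homogeneous symmetric function `h_r` (`h_0 = 1`). -/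
def hh : ℕ → SymFn
  | 0 => 1
  | r + 1 => MvPolynomial.X r

/-- `h_n` for an integer index, with `h_n = 0` for `n < 0`. -/
def hZ (n : ℤ) : SymFn := if n < 0 then 0 else hh n.toNat

/-- `h_λ = h_{λ₁} h_{λ₂} ⋯`. -/
def hProd (l : List ℕ) : SymFn := (l.map hh).prod

/-- The Schur function via the Jacobi–Trudi determinant
`s_λ = det(h_{λ_i - i + j})_{1 ≤ i,j ≤ ℓ(λ)}`. -/
def schur (l : List ℕ) : SymFn :=
  Matrix.det (Matrix.of fun i j : Fin l.length =>
    hZ (((l.get i : ℕ) : ℤ) - ((i : ℕ) : ℤ) + ((j : ℕ) : ℤ)))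

/-- A partition: a weakly decreasing list of positive integers. -/
def IsPartition (l : List ℕ) : Prop := l.Pairwise (· ≥ ·) ∧ ∀ x ∈ l, 0 < x

/-- A `k`-bounded partition: all parts at most `k`. -/
def KBounded (k : ℕ) (l : List ℕ) : Prop := ∀ x ∈ l, x ≤ k

/-- The main hook-length `h_M(λ) = λ₁ + ℓ(λ) - 1`. -/
def mainHook (l : List ℕ) : ℕ := l.headI + l.length - 1

/-- Dominance order: `Dominates μ λ` means `μ ≥ λ`, i.e.
`λ₁ + ⋯ + λ_i ≤ μ₁ + ⋯ + μ_i` for all `i`. -/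
def Dominates (mu lam : List ℕ) : Prop := ∀ i : ℕ, (lam.take i).sum ≤ (mu.take i).sum

/-- Auxiliary function (with fuel) computing the `k`-split of a partition:
successive blocks of main hook-length exactly `k` (the last block having
main hook-length at most `k`). -/
def kSplitAux (k : ℕ) : ℕ → List ℕ → List (List ℕ)
  | _, [] => []
  | 0, l => [l]
  | fuel + 1, a :: rest =>
    if (a :: rest).length ≤ k + 1 - a ∨ k + 1 - a = 0 then [a :: rest]
    else (a :: rest).take (k + 1 - a) :: kSplitAux k fuel ((a :: rest).drop (k + 1 - a))

/-- The `k`-split `λ^{→k}` of a `k`-bounded partition `λ`. -/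
def kSplit (k : ℕ) (l : List ℕ) : List (List ℕ) := kSplitAux k l.length l

/-- The `k`-split polynomial `G_λ^{(k)} = s_{λ^{(1)}} s_{λ^{(2)}} ⋯ s_{λ^{(r)}}`. -/
def Gk (k : ℕ) (l : List ℕ) : SymFn := ((kSplit k l).map schur).prod

/-- `Λ^{(k)}`: the linear span of the `h_λ` over `k`-bounded partitions `λ`. -/
def LamK (k : ℕ) : Submodule ℚ SymFn :=
  Submodule.span ℚ {f : SymFn | ∃ l : List ℕ, IsPartition l ∧ KBounded k l ∧ f = hProd l}

/-!
In the Jacobi–Trudi expansion of `s_ν`, a permutation `σ` contributes `∏ᵢ h_{νᵢ + σ(i) - i}`.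
Every index is at most `ν₁ + ℓ(ν) - 1 = h_M(ν)`, and by the rearrangement inequality `σ` can only
raise the sum of the first `j` indices, so the sorted list of nonzero indices dominates `ν`,
strictly unless `σ = 1`. Hence `s_ν - h_ν` is an integer combination of `h_μ` with `μ`
`h_M(ν)`-bounded and strictly dominating `ν`.

Dominance is compatible with products: if `a ⊵ α` and `b ⊵ β`, a prefix of `α ++ β` of length `j`
is bounded by a prefix of `a` plus a prefix of `b` of total length at most `j` (as `ℓ(a) ≤ ℓ(α)`),
hence by the `j` largest parts of `a ∪ b`. Since `λ` is the concatenation of the blocks of its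
`k`-split, each of main hook-length at most `k`, multiplying the block expansions gives the claim.
-/

theorem sum_le_sum_take_of_le : ∀ {c : List ℕ}, c.Pairwise (· ≥ ·) →
    ∀ {s : Multiset ℕ} {J : ℕ}, s ≤ c → Multiset.card s ≤ J → s.sum ≤ (c.take J).sum
  | [], _, s, _, hs, _ => by simp [Multiset.le_zero.mp (by simpa using hs)]
  | x :: c, hc, s, J, hs, hJ => by
    obtain ⟨hx, hc⟩ := List.pairwise_cons.mp hc
    rcases Multiset.empty_or_exists_mem s with rfl | ⟨z, hz⟩
    · simp
    obtain ⟨J, rfl⟩ : ∃ J', J = J' + 1 :=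
      Nat.exists_eq_add_one.mpr (lt_of_lt_of_le (Multiset.card_pos_iff_exists_mem.mpr ⟨z, hz⟩) hJ)
    obtain ⟨y, hy, hyx, hrest⟩ : ∃ y ∈ s, y ≤ x ∧ s.erase y ≤ c := by
      by_cases hxs : x ∈ s
      · refine ⟨x, hxs, le_rfl, ?_⟩
        simpa using Multiset.erase_le_erase x hs
      · have hsc : s ≤ c := (Multiset.le_cons_of_notMem hxs).mp (by simpa using hs)
        exact ⟨z, hz, hx z (by simpa using Multiset.mem_of_le hsc hz),
          (Multiset.erase_le z s).trans hsc⟩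
    have ih := sum_le_sum_take_of_le hc hrest (J := J)
      (by rw [Multiset.card_erase_of_mem hy, Nat.pred_eq_sub_one]; omega)
    rw [← Multiset.sum_erase hy, List.take_succ_cons, List.sum_cons]
    omega

theorem Multiset.prod_map_filter_ne_zero {M : Type*} [CommMonoid M] {f : ℕ → M} (hf : f 0 = 1)
    (s : Multiset ℕ) : ((s.filter (· ≠ 0)).map f).prod = (s.map f).prod := by
  induction s using Multiset.induction_on with
  | empty => simp
  | cons a s ih => by_cases ha : a = 0 <;> simp [ha, hf, ih]

theorem Multiset.sum_filter_ne_zero (s : Multiset ℕ) : (s.filter (· ≠ 0)).sum = s.sum := by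
  induction s using Multiset.induction_on with
  | empty => simp
  | cons a s ih => by_cases ha : a = 0 <;> simp [ha, ih]

def partitionOf (s : Multiset ℕ) : List ℕ := (s.filter (· ≠ 0)).sort (· ≥ ·)

theorem isPartition_partitionOf (s : Multiset ℕ) : IsPartition (partitionOf s) :=
  ⟨Multiset.pairwise_sort _ _, fun _ hx => by
    rw [partitionOf, Multiset.mem_sort, Multiset.mem_filter] at hx
    exact Nat.pos_of_ne_zero hx.2⟩

theorem kBounded_partitionOf {k : ℕ} {s : Multiset ℕ} (hs : ∀ x ∈ s, x ≤ k) :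
    KBounded k (partitionOf s) := fun x hx =>
  hs x (Multiset.mem_of_mem_filter ((Multiset.mem_sort _).mp hx))

theorem sum_partitionOf (s : Multiset ℕ) : (partitionOf s).sum = s.sum := by
  rw [← Multiset.sum_coe, partitionOf, Multiset.sort_eq, Multiset.sum_filter_ne_zero]

theorem hProd_partitionOf (s : Multiset ℕ) : hProd (partitionOf s) = (s.map hh).prod := by
  rw [hProd, ← Multiset.prod_coe, ← Multiset.map_coe, partitionOf, Multiset.sort_eq,
    Multiset.prod_map_filter_ne_zero rfl]

theorem sum_le_sum_take_partitionOf {s t : Multiset ℕ} {J : ℕ} (hts : t ≤ s)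
    (hJ : Multiset.card t ≤ J) : t.sum ≤ ((partitionOf s).take J).sum := by
  rw [← Multiset.sum_filter_ne_zero]
  refine sum_le_sum_take_of_le (Multiset.pairwise_sort _ _) ?_ ?_
  · rw [Multiset.sort_eq]; exact Multiset.filter_le_filter _ hts
  · exact (Multiset.card_le_card (Multiset.filter_le _ t)).trans hJ

theorem IsPartition.sublist {l l' : List ℕ} (hl : IsPartition l) (h : l'.Sublist l) :
    IsPartition l' :=
  ⟨hl.1.sublist h, fun x hx => hl.2 x (h.subset hx)⟩

theorem KBounded.sublist {k : ℕ} {l l' : List ℕ} (hl : KBounded k l) (h : l'.Sublist l) :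
    KBounded k l' := fun x hx => hl x (h.subset hx)

theorem sum_take_lt_sum {l : List ℕ} (hl : ∀ x ∈ l, 0 < x) {j : ℕ} (hj : j < l.length) :
    (l.take j).sum < l.sum := by
  rw [← List.sum_take_add_sum_drop l j, Nat.lt_add_right_iff_pos]
  exact List.sum_pos _ (fun x hx => hl x (List.mem_of_mem_drop hx))
    (List.ne_nil_of_length_pos (by simpa using hj))

theorem length_le_of_dominates {μ lam : List ℕ} (hμ : ∀ x ∈ μ, 0 < x) (hdom : Dominates μ lam)
    (hsum : μ.sum = lam.sum) : μ.length ≤ lam.length := by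
  by_contra! hlen
  have := hdom lam.length
  rw [List.take_length] at this
  exact absurd (sum_take_lt_sum hμ hlen) (by omega)

def dominators (k : ℕ) (lam : List ℕ) : Set (List ℕ) :=
  {μ | IsPartition μ ∧ KBounded k μ ∧ μ.sum = lam.sum ∧ Dominates μ lam}

def strictDominators (k : ℕ) (lam : List ℕ) : Set (List ℕ) :=
  {μ | μ ∈ dominators k lam ∧ ∃ j, (lam.take j).sum < (μ.take j).sum}

theorem strictDominators_subset (k : ℕ) (lam : List ℕ) :
    strictDominators k lam ⊆ dominators k lam := fun _ h => h.1

theorem self_mem_dominators {k : ℕ} {l : List ℕ} (hl : IsPartition l) (hb : KBounded k l) :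
    l ∈ dominators k l :=
  ⟨hl, hb, rfl, fun _ => le_rfl⟩

theorem sum_take_append (α β : List ℕ) (J : ℕ) :
    ((α ++ β).take J).sum = (α.take J).sum + (β.take (J - α.length)).sum := by
  rw [List.take_append, List.sum_append]

theorem sum_take_add_sum_take_le_partitionOf {a b : List ℕ} {n : ℕ} (ha : a.length ≤ n)
    (J : ℕ) : (a.take J).sum + (b.take (J - n)).sum ≤ ((partitionOf (a ++ b)).take J).sum := by
  rw [← List.sum_append, ← Multiset.sum_coe]
  refine sum_le_sum_take_partitionOf ?_ ?_
  · exact Multiset.coe_le.mpr ((List.take_sublist _ _).append (List.take_sublist _ _)).subperm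
  · simp only [Multiset.coe_card, List.length_append, List.length_take]
    omega

theorem dominates_partitionOf (l : List ℕ) : Dominates (partitionOf l) l := fun j =>
  sum_le_sum_take_partitionOf (Multiset.coe_le.mpr (List.take_sublist j l).subperm)
    (by simp)

section Merge

variable {k : ℕ} {α β a b : List ℕ}

theorem length_le_of_mem_dominators (ha : a ∈ dominators k α) : a.length ≤ α.length :=
  length_le_of_dominates ha.1.2 ha.2.2.2 ha.2.2.1

theorem partitionOf_append_mem_dominators (ha : a ∈ dominators k α) (hb : b ∈ dominators k β) :
    partitionOf (a ++ b) ∈ dominators k (α ++ β) := by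
  refine ⟨isPartition_partitionOf _, kBounded_partitionOf ?_, ?_, fun J => ?_⟩
  · intro x hx
    rcases List.mem_append.mp (Multiset.mem_coe.mp (by simpa using hx)) with h | h
    exacts [ha.2.1 x h, hb.2.1 x h]
  · simp [sum_partitionOf, ha.2.2.1, hb.2.2.1]
  · rw [sum_take_append]
    exact (add_le_add (ha.2.2.2 J) (hb.2.2.2 _)).trans
      (sum_take_add_sum_take_le_partitionOf (length_le_of_mem_dominators ha) J)

theorem partitionOf_append_mem_strictDominators (ha : a ∈ dominators k α)
    (hb : b ∈ dominators k β) (hstrict : a ∈ strictDominators k α ∨ b ∈ strictDominators k β) :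
    partitionOf (a ++ b) ∈ strictDominators k (α ++ β) := by
  refine ⟨partitionOf_append_mem_dominators ha hb, ?_⟩
  have hlen := length_le_of_mem_dominators ha
  rcases hstrict with ⟨-, j, hj⟩ | ⟨-, j, hj⟩
  · refine ⟨j, lt_of_lt_of_le ?_ (sum_take_add_sum_take_le_partitionOf hlen j)⟩
    rw [sum_take_append]
    exact add_lt_add_of_lt_of_le hj (hb.2.2.2 _)
  · refine ⟨α.length + j, lt_of_lt_of_le ?_ (sum_take_add_sum_take_le_partitionOf hlen _)⟩
    rw [sum_take_append, Nat.add_sub_cancel_left]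
    exact add_lt_add_of_le_of_lt (ha.2.2.2 _) hj

end Merge

def hSpan (S : Set (List ℕ)) : Submodule ℤ SymFn := Submodule.span ℤ (hProd '' S)

open scoped Pointwise in
theorem mul_mem_hSpan {S T U : Set (List ℕ)}
    (hmul : ∀ a ∈ S, ∀ b ∈ T, ∃ c ∈ U, hProd a * hProd b = hProd c) {x y : SymFn}
    (hx : x ∈ hSpan S) (hy : y ∈ hSpan T) : x * y ∈ hSpan U := by
  have hxy : x * y ∈ Submodule.span ℤ (hProd '' S * hProd '' T) :=
    Submodule.span_mul_span ℤ (hProd '' S) (hProd '' T) ▸ Submodule.mul_mem_mul hx hy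
  refine Submodule.span_mono ?_ hxy
  rintro _ ⟨_, ⟨a, ha, rfl⟩, _, ⟨b, hb, rfl⟩, rfl⟩
  obtain ⟨c, hc, he⟩ := hmul a ha b hb
  exact ⟨c, hc, he.symm⟩

theorem hProd_append (a b : List ℕ) : hProd (a ++ b) = hProd a * hProd b := by
  simp [hProd]

theorem hProd_mul_hProd (a b : List ℕ) : hProd a * hProd b = hProd (partitionOf (a ++ b)) := by
  rw [hProd_partitionOf, Multiset.map_coe, Multiset.prod_coe, List.map_append, List.prod_append]
  rfl

theorem exists_sum_eq_of_mem_hSpan {S : Set (List ℕ)} {x : SymFn} (hx : x ∈ hSpan S) :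
    ∃ (A : Finset (List ℕ)) (g : List ℕ → ℤ), ↑A ⊆ S ∧ x = ∑ μ ∈ A, g μ • hProd μ := by
  obtain ⟨c, hc, rfl⟩ := (Finsupp.mem_span_image_iff_linearCombination ℤ).mp hx
  exact ⟨c.support, c, hc, rfl⟩

section Blocks

variable {k : ℕ}

theorem hProd_mem_hSpan_dominators {l : List ℕ} (hl : IsPartition l) (hb : KBounded k l) :
    hProd l ∈ hSpan (dominators k l) :=
  Submodule.subset_span ⟨l, self_mem_dominators hl hb, rfl⟩

theorem hSpan_strictDominators_le (lam : List ℕ) :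
    hSpan (strictDominators k lam) ≤ hSpan (dominators k lam) :=
  Submodule.span_mono (Set.image_mono (strictDominators_subset k lam))

theorem mul_mem_hSpan_strictDominators {α β : List ℕ} {x y : SymFn}
    (hx : x ∈ hSpan (dominators k α)) (hy : y ∈ hSpan (dominators k β))
    (hstrict : x ∈ hSpan (strictDominators k α) ∨ y ∈ hSpan (strictDominators k β)) :
    x * y ∈ hSpan (strictDominators k (α ++ β)) := by
  rcases hstrict with hx' | hy'
  · exact mul_mem_hSpan (fun a ha b hb => ⟨_, partitionOf_append_mem_strictDominators ha.1 hb
      (Or.inl ha), hProd_mul_hProd a b⟩) hx' hy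
  · exact mul_mem_hSpan (fun a ha b hb => ⟨_, partitionOf_append_mem_strictDominators ha hb.1
      (Or.inr hb), hProd_mul_hProd a b⟩) hx hy'

end Blocks

section PrefixSums

variable {n : ℕ}

theorem antivary_ite_val_lt (j : ℕ) :
    Antivary (fun i : Fin n => if (i : ℕ) < j then 1 else 0) (fun i : Fin n => (i : ℕ)) := by
  intro i i' h
  simp only at h ⊢
  split_ifs <;> omega

theorem sum_val_le_sum_perm_val (σ : Equiv.Perm (Fin n)) (j : ℕ) :
    ∑ i : Fin n with i.val < j, (i : ℕ) ≤ ∑ i : Fin n with i.val < j, (σ i : ℕ) := by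
  simpa only [smul_eq_mul, boole_mul, ← Finset.sum_filter] using
    (antivary_ite_val_lt j).sum_smul_le_sum_smul_comp_perm (σ := σ)

theorem exists_sum_val_lt_sum_perm_val {σ : Equiv.Perm (Fin n)} (hσ : σ ≠ 1) :
    ∃ j, ∑ i : Fin n with i.val < j, (i : ℕ) < ∑ i : Fin n with i.val < j, (σ i : ℕ) := by
  obtain ⟨a, b, hab, hinv⟩ : ∃ a b, a < b ∧ σ b < σ a := by
    by_contra! hmono
    have hσmono : StrictMono σ := fun a b h =>
      lt_of_le_of_ne (hmono a b h) (σ.injective.ne h.ne)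
    exact hσ (Equiv.ext fun i => hσmono.apply_eq)
  -- the inversion keeps `𝟙[i ≤ a]` and `σ i` from antivarying
  refine ⟨a + 1, ?_⟩
  have hlt := ((antivary_ite_val_lt (a + 1)).sum_mul_lt_sum_mul_comp_perm_iff (σ := σ)).mpr
    fun hanti => by
      have := @hanti b a hinv
      simp only at this
      split_ifs at this <;> omega
  simpa only [smul_eq_mul, boole_mul, ← Finset.sum_filter] using hlt

variable {σ : Equiv.Perm (Fin n)} {e ν : Fin n → ℕ}

theorem sum_filter_add_eq_of_add_eq (h : ∀ i, e i + i = ν i + σ i) (j : ℕ) :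
    ∑ i : Fin n with i.val < j, e i + ∑ i : Fin n with i.val < j, (i : ℕ)
      = ∑ i : Fin n with i.val < j, ν i + ∑ i : Fin n with i.val < j, (σ i : ℕ) := by
  rw [← Finset.sum_add_distrib, ← Finset.sum_add_distrib]
  exact Finset.sum_congr rfl fun i _ => h i

theorem dominates_ofFn_of_add_eq (h : ∀ i, e i + i = ν i + σ i) :
    Dominates (List.ofFn e) (List.ofFn ν) := fun j => by
  rw [List.sum_take_ofFn, List.sum_take_ofFn]
  have := sum_filter_add_eq_of_add_eq h j
  have := sum_val_le_sum_perm_val σ j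
  omega

theorem exists_sum_take_ofFn_lt_of_add_eq (h : ∀ i, e i + i = ν i + σ i) (hσ : σ ≠ 1) :
    ∃ j, ((List.ofFn ν).take j).sum < ((List.ofFn e).take j).sum := by
  obtain ⟨j, hj⟩ := exists_sum_val_lt_sum_perm_val hσ
  refine ⟨j, ?_⟩
  rw [List.sum_take_ofFn, List.sum_take_ofFn]
  have := sum_filter_add_eq_of_add_eq h j
  omega

theorem sum_ofFn_eq_of_add_eq (h : ∀ i, e i + i = ν i + σ i) :
    (List.ofFn e).sum = (List.ofFn ν).sum := by
  have hσsum : ∑ i, (σ i : ℕ) = ∑ i : Fin n, (i : ℕ) := Equiv.sum_comp σ (fun i => (i : ℕ))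
  have hsum : ∑ i, e i + ∑ i : Fin n, (i : ℕ) = ∑ i, ν i + ∑ i, (σ i : ℕ) := by
    rw [← Finset.sum_add_distrib, ← Finset.sum_add_distrib]
    exact Finset.sum_congr rfl fun i _ => h i
  rw [List.sum_ofFn, List.sum_ofFn]
  omega

end PrefixSums

theorem le_headI_of_mem {l : List ℕ} (hl : l.Pairwise (· ≥ ·)) {x : ℕ} (hx : x ∈ l) :
    x ≤ l.headI := by
  cases l with
  | nil => simp at hx
  | cons y t =>
    rcases List.mem_cons.mp hx with rfl | h
    · exact le_rfl
    · exact List.rel_of_pairwise_cons hl h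

theorem hZ_natCast (m : ℕ) : hZ m = hh m := by
  simp [hZ]

theorem schur_eq_sum_perm (ν : List ℕ) :
    schur ν = ∑ σ : Equiv.Perm (Fin ν.length),
      Equiv.Perm.sign σ • ∏ i, hZ ((ν.get i : ℤ) - i + σ i) := by
  rw [schur, ← Matrix.det_transpose, Matrix.det_apply]
  rfl

theorem prod_hZ_perm_one (ν : List ℕ) :
    ∏ i : Fin ν.length, hZ ((ν.get i : ℤ) - i + (1 : Equiv.Perm (Fin ν.length)) i) = hProd ν := by
  simp only [Equiv.Perm.one_apply, sub_add_cancel, hZ_natCast]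
  conv_rhs => rw [hProd, ← List.ofFn_get ν, List.map_ofFn, List.prod_ofFn]
  rfl

theorem prod_hZ_mem_hSpan_strictDominators {k : ℕ} {ν : List ℕ} (hν : ν.Pairwise (· ≥ ·))
    (hk : mainHook ν ≤ k) {σ : Equiv.Perm (Fin ν.length)} (hσ : σ ≠ 1) :
    ∏ i, hZ ((ν.get i : ℤ) - i + σ i) ∈ hSpan (strictDominators k ν) := by
  by_cases hneg : ∃ i, ν.get i + σ i < i
  · obtain ⟨i, hi⟩ := hneg
    rw [Finset.prod_eq_zero (Finset.mem_univ i) (by rw [hZ, if_pos (by omega)])]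
    exact zero_mem _
  push Not at hneg
  set e : Fin ν.length → ℕ := fun i => ν.get i + σ i - i
  have he : ∀ i, e i + i = ν.get i + σ i := fun i => Nat.sub_add_cancel (hneg i)
  have hprod : ∏ i, hZ ((ν.get i : ℤ) - i + σ i) = hProd (partitionOf (List.ofFn e)) := by
    rw [hProd_partitionOf, Multiset.map_coe, Multiset.prod_coe, List.map_ofFn, List.prod_ofFn]
    refine Finset.prod_congr rfl fun i _ => ?_
    rw [show (ν.get i : ℤ) - i + σ i = (e i : ℕ) by have := he i; omega, hZ_natCast]
    rfl
  have hdom : Dominates (List.ofFn e) ν := by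
    simpa only [List.ofFn_get] using dominates_ofFn_of_add_eq he
  have hsort : Dominates (partitionOf (List.ofFn e)) (List.ofFn e) := dominates_partitionOf _
  refine hprod ▸ Submodule.subset_span ⟨_, ⟨⟨isPartition_partitionOf _, ?_, ?_,
    fun j => (hdom j).trans (hsort j)⟩, ?_⟩, rfl⟩
  · refine kBounded_partitionOf fun x hx => ?_
    obtain ⟨i, rfl⟩ := List.mem_ofFn.mp (Multiset.mem_coe.mp hx)
    have := le_headI_of_mem hν (List.get_mem ν i)
    have := (σ i).isLt
    have := he i
    unfold mainHook at hk
    omega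
  · rw [sum_partitionOf, Multiset.sum_coe, sum_ofFn_eq_of_add_eq he, List.ofFn_get]
  · obtain ⟨j, hj⟩ := exists_sum_take_ofFn_lt_of_add_eq he hσ
    rw [List.ofFn_get] at hj
    exact ⟨j, hj.trans_le (hsort j)⟩

theorem schur_sub_hProd_mem_hSpan {k : ℕ} {ν : List ℕ} (hν : ν.Pairwise (· ≥ ·))
    (hk : mainHook ν ≤ k) : schur ν - hProd ν ∈ hSpan (strictDominators k ν) := by
  rw [schur_eq_sum_perm, ← Finset.add_sum_erase _ _ (Finset.mem_univ 1), Equiv.Perm.sign_one,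
    one_smul, prod_hZ_perm_one, add_sub_cancel_left]
  refine Submodule.sum_mem _ fun σ hσ => ?_
  rw [Units.smul_def]
  exact Submodule.smul_mem _ _
    (prod_hZ_mem_hSpan_strictDominators hν hk (Finset.mem_erase.mp hσ).1)

theorem prod_schur_sub_hProd_mem_hSpan {k : ℕ} : ∀ B : List (List ℕ),
    IsPartition B.flatten → KBounded k B.flatten → (∀ ν ∈ B, mainHook ν ≤ k) →
      (B.map schur).prod - hProd B.flatten ∈ hSpan (strictDominators k B.flatten)
  | [], _, _, _ => by simp [hProd]
  | ν :: B, hp, hb, hk => by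
    rw [List.flatten_cons] at hp hb ⊢
    have hνB := List.sublist_append_left ν B.flatten
    have hBν := List.sublist_append_right ν B.flatten
    have hB := prod_schur_sub_hProd_mem_hSpan B (hp.sublist hBν) (hb.sublist hBν)
      fun ν' h => hk ν' (List.mem_cons_of_mem ν h)
    have hν := schur_sub_hProd_mem_hSpan (hp.sublist hνB).1 (hk ν List.mem_cons_self)
    have hdomB : (B.map schur).prod ∈ hSpan (dominators k B.flatten) := by
      simpa using add_mem (hSpan_strictDominators_le _ hB)
        (hProd_mem_hSpan_dominators (hp.sublist hBν) (hb.sublist hBν))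
    have hdomν := hProd_mem_hSpan_dominators (hp.sublist hνB) (hb.sublist hνB)
    have hsplit : ((ν :: B).map schur).prod - hProd (ν ++ B.flatten)
        = (schur ν - hProd ν) * (B.map schur).prod
          + hProd ν * ((B.map schur).prod - hProd B.flatten) := by
      rw [List.map_cons, List.prod_cons, hProd_append]
      ring
    rw [hsplit]
    exact add_mem
      (mul_mem_hSpan_strictDominators (hSpan_strictDominators_le _ hν) hdomB (Or.inl hν))
      (mul_mem_hSpan_strictDominators hdomν (hSpan_strictDominators_le _ hB) (Or.inr hB))

theorem flatten_kSplitAux (k : ℕ) : ∀ (fuel : ℕ) (l : List ℕ), (kSplitAux k fuel l).flatten = l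
  | _, [] => by simp [kSplitAux]
  | 0, _ :: _ => by simp [kSplitAux]
  | fuel + 1, a :: rest => by
    rw [kSplitAux]
    split_ifs
    · simp
    · rw [List.flatten_cons, flatten_kSplitAux k fuel, List.take_append_drop]

theorem mainHook_le_of_mem_kSplitAux {k : ℕ} : ∀ {fuel : ℕ} {l : List ℕ}, KBounded k l →
    l.length ≤ fuel → ∀ ν ∈ kSplitAux k fuel l, mainHook ν ≤ k
  | _, [], _, _ => by simp [kSplitAux]
  | 0, _ :: _, _, hfuel => by simp at hfuel
  | fuel + 1, a :: rest, hb, hfuel => by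
    have ha := hb a List.mem_cons_self
    rw [kSplitAux]
    split_ifs with hshort
    · simp only [List.length_cons] at hshort
      simp only [List.mem_singleton, forall_eq, mainHook, List.headI_cons, List.length_cons]
      omega
    · intro ν hν
      rcases List.mem_cons.mp hν with rfl | hν
      · rw [List.take_cons (by omega)]
        simp only [mainHook, List.headI_cons, List.length_cons, List.length_take]
        omega
      · exact mainHook_le_of_mem_kSplitAux (hb.sublist (List.drop_sublist _ _))
          (by simp only [List.length_cons, List.length_drop] at hfuel ⊢; omega) ν hν

theorem Gk_h_unitriangular_general (k : ℕ) (l : List ℕ)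
    (hl : IsPartition l) (hb : KBounded k l) :
    ∃ (A : Finset (List ℕ)) (g : List ℕ → ℤ),
      (∀ μ ∈ A, IsPartition μ ∧ KBounded k μ ∧ μ.sum = l.sum ∧ Dominates μ l ∧ μ ≠ l) ∧
      Gk k l = hProd l + ∑ μ ∈ A, (g μ : ℚ) • hProd μ := by
  have hflat : (kSplit k l).flatten = l := flatten_kSplitAux k _ l
  have hmem : Gk k l - hProd l ∈ hSpan (strictDominators k l) := by
    simpa only [Gk, hflat] using prod_schur_sub_hProd_mem_hSpan (kSplit k l)
      (by rwa [hflat]) (by rwa [hflat]) (mainHook_le_of_mem_kSplitAux hb le_rfl)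
  obtain ⟨A, g, hA, hsum⟩ := exists_sum_eq_of_mem_hSpan hmem
  refine ⟨A, g, fun μ hμ => ?_, ?_⟩
  · obtain ⟨⟨hp, hkb, hs, hd⟩, j, hj⟩ := hA hμ
    exact ⟨hp, hkb, hs, hd, by rintro rfl; exact lt_irrefl _ hj⟩
  · simp only [Int.cast_smul_eq_zsmul, ← hsum, add_sub_cancel]

/-- For any `k`-bounded partition `λ`, the `k`-split polynomial
expands unitriangularly in the homogeneous basis with integer coefficients and
`k`-bounded indices: `G_λ^{(k)} = h_λ + Σ_{μ > λ, μ₁ ≤ k} g_{λμ}^{(k)} h_μ`. -/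
theorem Gk_h_unitriangular (k : ℕ) (hk : 1 ≤ k) (l : List ℕ)
    (hl : IsPartition l) (hb : KBounded k l) :
    ∃ (A : Finset (List ℕ)) (g : List ℕ → ℤ),
      (∀ μ ∈ A, IsPartition μ ∧ KBounded k μ ∧ μ.sum = l.sum ∧ Dominates μ l ∧ μ ≠ l) ∧
      Gk k l = hProd l + ∑ μ ∈ A, (g μ : ℚ) • hProd μ :=
  Gk_h_unitriangular_general k l hl hb
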